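/- arXiv:1611.01390 — 2 statements merged into one kernel-verified Lean document; each statement's English description precedes it below -/
import Mathlib

section
/- Let F : (0,∞) → ℝ be defined by F(v) = (2 − v²)/(π(1+v²)²) − v²(v²+4)·(ln v − ln(√(v²+1)+1))/(π(v²+1)^{5/2}). Then v⁴·F(v) converges to 16/(3π) as v → ∞; in particular F(v) decays like a constant times v⁻⁴ at infinity. -/
/-!
With `t = 1/v` and `s = √(1 + t²)`, one has `v⁴ F(v) = N(t) / (π t³ s⁵)` where
`N(t) = t s (2t² - 1) + (1 + 4t²) arsinh t`. Now `N(0) = 0` and `N'(t) = 8t (t s + arsinh t)`,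
while `2t ≤ t s + arsinh t ≤ 2ts` because the middle term vanishes at `0` with derivative `2s`.
Comparing derivatives gives `16t³/3 ≤ N(t) ≤ 16t³s/3`, so `v⁴ F(v)` is squeezed between
`16/(3π s⁵)` and `16/(3π s⁴)`, and `s → 1`.
-/

open Real

/-- The closed-form inverse cone-projection transform `L⁻¹(h)`. -/
noncomputable def Finv (v : ℝ) : ℝ :=
  (2 - v ^ 2) / (π * (1 + v ^ 2) ^ 2) -
    v ^ 2 * (v ^ 2 + 4) * (Real.log v - Real.log (Real.sqrt (v ^ 2 + 1) + 1)) /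
      (π * (v ^ 2 + 1) ^ ((5 : ℝ) / 2))

open Filter Topology Set

lemma le_of_hasDerivAt_le {f g f' g' : ℝ → ℝ} {a b : ℝ}
    (hf : ∀ x, HasDerivAt f (f' x) x) (hg : ∀ x, HasDerivAt g (g' x) x)
    (ha : f a ≤ g a) (hfg : ∀ x, a ≤ x → f' x ≤ g' x) (hab : a ≤ b) : f b ≤ g b :=
  image_le_of_deriv_right_le_deriv_boundary (fun x _ => (hf x).continuousAt.continuousWithinAt)
    (fun x _ => (hf x).hasDerivWithinAt) ha (fun x _ => (hg x).continuousAt.continuousWithinAt)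
    (fun x _ => (hg x).hasDerivWithinAt) (fun x hx => hfg x hx.1) ⟨hab, le_rfl⟩

lemma hasDerivAt_sqrt_one_add_sq (x : ℝ) :
    HasDerivAt (fun x => √(1 + x ^ 2)) (x / √(1 + x ^ 2)) x := by
  convert ((hasDerivAt_pow 2 x).const_add 1).sqrt (by positivity) using 1
  ring

lemma hasDerivAt_mul_sqrt_one_add_sq (x : ℝ) :
    HasDerivAt (fun x => x * √(1 + x ^ 2)) (√(1 + x ^ 2) + x ^ 2 / √(1 + x ^ 2)) x := by
  refine ((hasDerivAt_id' x).mul (hasDerivAt_sqrt_one_add_sq x)).congr_deriv ?_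
  ring

lemma hasDerivAt_mul_sqrt_add_arsinh (x : ℝ) :
    HasDerivAt (fun x => x * √(1 + x ^ 2) + arsinh x) (2 * √(1 + x ^ 2)) x := by
  refine ((hasDerivAt_mul_sqrt_one_add_sq x).add (hasDerivAt_arsinh x)).congr_deriv ?_
  have hs2 : √(1 + x ^ 2) ^ 2 = 1 + x ^ 2 := sq_sqrt (by positivity)
  field_simp
  linear_combination -hs2

lemma two_mul_le_mul_sqrt_add_arsinh {t : ℝ} (ht : 0 ≤ t) :
    2 * t ≤ t * √(1 + t ^ 2) + arsinh t := by
  refine le_of_hasDerivAt_le (fun x => (hasDerivAt_id x).const_mul 2)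
    hasDerivAt_mul_sqrt_add_arsinh (by simp) (fun x _ => ?_) ht
  simpa using one_le_sqrt.2 (by nlinarith : (1:ℝ) ≤ 1 + x ^ 2)

lemma mul_sqrt_add_arsinh_le {t : ℝ} (ht : 0 ≤ t) :
    t * √(1 + t ^ 2) + arsinh t ≤ 2 * (t * √(1 + t ^ 2)) := by
  refine le_of_hasDerivAt_le hasDerivAt_mul_sqrt_add_arsinh
    (fun x => (hasDerivAt_mul_sqrt_one_add_sq x).const_mul 2) (by simp) (fun x _ => ?_) ht
  have : 0 ≤ x ^ 2 / √(1 + x ^ 2) := by positivity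
  linarith

noncomputable def finvNumerator (t : ℝ) : ℝ :=
  t * √(1 + t ^ 2) * (2 * t ^ 2 - 1) + (1 + 4 * t ^ 2) * arsinh t

lemma hasDerivAt_finvNumerator (x : ℝ) :
    HasDerivAt finvNumerator (8 * x * (x * √(1 + x ^ 2) + arsinh x)) x := by
  have hs2 : √(1 + x ^ 2) ^ 2 = 1 + x ^ 2 := sq_sqrt (by positivity)
  have hpoly : HasDerivAt (fun x : ℝ => 2 * x ^ 2 - 1) (4 * x) x :=
    (((hasDerivAt_pow 2 x).const_mul 2).sub_const 1).congr_deriv (by ring)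
  have hpoly' : HasDerivAt (fun x : ℝ => 1 + 4 * x ^ 2) (8 * x) x :=
    (((hasDerivAt_pow 2 x).const_mul 4).const_add 1).congr_deriv (by ring)
  refine (((hasDerivAt_mul_sqrt_one_add_sq x).mul hpoly).add
    (hpoly'.mul (hasDerivAt_arsinh x))).congr_deriv ?_
  field_simp
  linear_combination (-2 * x ^ 2 - 1) * hs2

lemma finvNumerator_ge {t : ℝ} (ht : 0 ≤ t) : 16 / 3 * t ^ 3 ≤ finvNumerator t := by
  refine le_of_hasDerivAt_le (fun x => (hasDerivAt_pow 3 x).const_mul (16 / 3))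
    hasDerivAt_finvNumerator (by simp [finvNumerator]) (fun x hx => ?_) ht
  nlinarith [two_mul_le_mul_sqrt_add_arsinh hx]

lemma finvNumerator_le {t : ℝ} (ht : 0 ≤ t) :
    finvNumerator t ≤ 16 / 3 * t ^ 3 * √(1 + t ^ 2) := by
  refine le_of_hasDerivAt_le hasDerivAt_finvNumerator
    (fun x => ((hasDerivAt_pow 3 x).const_mul (16 / 3)).mul (hasDerivAt_sqrt_one_add_sq x))
    (by simp [finvNumerator]) (fun x hx => ?_) ht
  have : 0 ≤ x ^ 3 * (x / √(1 + x ^ 2)) := by positivity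
  nlinarith [mul_sqrt_add_arsinh_le hx]

lemma Finv_inv {t : ℝ} (ht : 0 < t) :
    Finv t⁻¹ = t * finvNumerator t / (π * √(1 + t ^ 2) ^ 5) := by
  have hsqrt : √(t⁻¹ ^ 2 + 1) = √(1 + t ^ 2) / t := by
    rw [show t⁻¹ ^ 2 + 1 = (1 + t ^ 2) / t ^ 2 by field_simp,
      sqrt_div' _ (sq_nonneg t), sqrt_sq ht.le]
  have hlog : log t⁻¹ - log (√(1 + t ^ 2) / t + 1) = -arsinh t := by
    rw [arsinh, show √(1 + t ^ 2) / t + 1 = (t + √(1 + t ^ 2)) / t by field_simp; ring,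
      log_div (by positivity) ht.ne', log_inv]
    ring
  have hs2 : √(1 + t ^ 2) ^ 2 = 1 + t ^ 2 := sq_sqrt (by positivity)
  rw [Finv, rpow_div_two_eq_sqrt _ (by positivity), rpow_ofNat, hsqrt, hlog, finvNumerator]
  field_simp
  linear_combination t * (2 * t ^ 2 - 1) * √(1 + t ^ 2) * (√(1 + t ^ 2) ^ 2 + 1 + t ^ 2) * hs2

lemma pow_four_mul_Finv_mem_Icc {v : ℝ} (hv : 0 < v) :
    v ^ 4 * Finv v ∈
      Icc (16 / (3 * π * √(1 + v⁻¹ ^ 2) ^ 5)) (16 / (3 * π * √(1 + v⁻¹ ^ 2) ^ 4)) := by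
  set t := v⁻¹
  have ht : 0 < t := inv_pos.2 hv
  have hFinv : v ^ 4 * Finv v = finvNumerator t / (π * t ^ 3 * √(1 + t ^ 2) ^ 5) := by
    have hvt : v * t = 1 := mul_inv_cancel₀ hv.ne'
    rw [← inv_inv v, Finv_inv ht]
    field_simp
    rw [← mul_pow, hvt, one_pow, one_mul]
  rw [hFinv]
  constructor
  · rw [div_le_div_iff₀ (by positivity) (by positivity)]
    linarith [mul_le_mul_of_nonneg_right (finvNumerator_ge ht.le)
      (by positivity : 0 ≤ 3 * π * √(1 + t ^ 2) ^ 5)]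
  · rw [div_le_div_iff₀ (by positivity) (by positivity)]
    linarith [mul_le_mul_of_nonneg_right (finvNumerator_le ht.le)
      (by positivity : 0 ≤ 3 * π * √(1 + t ^ 2) ^ 4)]

/-- `v⁴ · F(v) → 16/(3π)` as `v → ∞`; in particular `F` decays like `v⁻⁴`. -/
theorem stmt2 :
    Filter.Tendsto (fun v : ℝ => v ^ 4 * Finv v) Filter.atTop (nhds (16 / (3 * π))) := by
  have hs : Tendsto (fun v : ℝ => √(1 + v⁻¹ ^ 2)) atTop (𝓝 1) := by
    simpa using ((tendsto_inv_atTop_zero.pow 2).const_add 1).sqrt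
  have hbound (k : ℕ) :
      Tendsto (fun v : ℝ => 16 / (3 * π * √(1 + v⁻¹ ^ 2) ^ k)) atTop (𝓝 (16 / (3 * π))) := by
    convert (tendsto_const_nhds (x := (16 : ℝ))).div ((hs.pow k).const_mul (3 * π))
      (by positivity) using 2 <;> simp
  have hmem := (eventually_gt_atTop 0).mono fun v hv => pow_four_mul_Finv_mem_Icc hv
  exact tendsto_of_tendsto_of_tendsto_of_le_of_le' (hbound 5) (hbound 4)
    (hmem.mono fun _ h => h.1) (hmem.mono fun _ h => h.2)
end

section
/- Let F : (0,∞) → ℝ be defined by F(v) = (2 − v²)/(π(1+v²)²) − v²(v²+4)·(ln v − ln(√(v²+1)+1))/(π(v²+1)^{5/2}). Then F is Lebesgue integrable on (0,∞). -/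
/-!
The logarithmic factor is `log v - log (√(v² + 1) + 1) = -arsinh (1 / v)`, and `arsinh x ≤ x`
for `x ≥ 0`. Hence the `v²` in front absorbs the logarithmic singularity at `0`, and both terms
of `F` are bounded by a multiple of `1 / (1 + v²)`, which is integrable on the whole line.
-/

open Real MeasureTheory

lemma Real.arsinh_le_self {x : ℝ} (hx : 0 ≤ x) : arsinh x ≤ x :=
  calc arsinh x ≤ arsinh (sinh x) := arsinh_le_arsinh.2 (self_le_sinh_iff.2 hx)
    _ = x := arsinh_sinh x

lemma Real.arsinh_inv {v : ℝ} (hv : 0 < v) :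
    arsinh v⁻¹ = log (√(v ^ 2 + 1) + 1) - log v := by
  have hsqrt : √(1 + v⁻¹ ^ 2) = √(v ^ 2 + 1) / v := by
    rw [eq_div_iff hv.ne', ← sqrt_sq hv.le, ← sqrt_mul (by positivity), sqrt_sq hv.le]
    congr 1
    field_simp
  rw [arsinh, hsqrt, ← log_div (by positivity) hv.ne']
  congr 1
  field_simp
  ring

lemma Real.rpow_five_halves {x : ℝ} (hx : 0 ≤ x) : x ^ ((5 : ℝ) / 2) = x ^ 2 * √x := by
  rw [show (5 : ℝ) / 2 = (2 : ℕ) + 1 / 2 by norm_num, rpow_add' hx (by norm_num), rpow_natCast,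
    sqrt_eq_rpow]

lemma Finv_eq {v : ℝ} (hv : 0 < v) :
    Finv v = (2 - v ^ 2) / (π * (1 + v ^ 2) ^ 2) +
      v ^ 2 * (v ^ 2 + 4) * arsinh v⁻¹ / (π * (v ^ 2 + 1) ^ ((5 : ℝ) / 2)) := by
  rw [Finv, arsinh_inv hv]
  ring

lemma abs_two_sub_sq_div_le (v : ℝ) :
    |(2 - v ^ 2) / (π * (1 + v ^ 2) ^ 2)| ≤ 2 / π * (1 + v ^ 2)⁻¹ := by
  have h : |2 - v ^ 2| ≤ 2 * (1 + v ^ 2) := abs_le.2 ⟨by nlinarith, by nlinarith⟩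
  rw [abs_div, abs_of_pos (show 0 < π * (1 + v ^ 2) ^ 2 by positivity)]
  calc |2 - v ^ 2| / (π * (1 + v ^ 2) ^ 2) ≤ 2 * (1 + v ^ 2) / (π * (1 + v ^ 2) ^ 2) := by
        gcongr
    _ = 2 / π * (1 + v ^ 2)⁻¹ := by field_simp

lemma abs_sq_mul_arsinh_inv_div_le {v : ℝ} (hv : 0 < v) :
    |v ^ 2 * (v ^ 2 + 4) * arsinh v⁻¹ / (π * (v ^ 2 + 1) ^ ((5 : ℝ) / 2))| ≤
      4 / π * (1 + v ^ 2)⁻¹ := by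
  have harsinh : 0 ≤ arsinh v⁻¹ := arsinh_nonneg_iff.2 (inv_nonneg.2 hv.le)
  have hnum : v ^ 2 * (v ^ 2 + 4) * arsinh v⁻¹ ≤ 4 * ((v ^ 2 + 1) * √(v ^ 2 + 1)) :=
    calc v ^ 2 * (v ^ 2 + 4) * arsinh v⁻¹ ≤ v ^ 2 * (v ^ 2 + 4) * v⁻¹ := by
          gcongr; exact arsinh_le_self (inv_nonneg.2 hv.le)
      _ = (v ^ 2 + 4) * v := by field_simp
      _ ≤ 4 * ((v ^ 2 + 1) * √(v ^ 2 + 1)) := by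
          rw [← mul_assoc]
          gcongr
          · linarith [sq_nonneg v]
          · exact le_sqrt_of_sq_le (by linarith)
  rw [abs_of_nonneg (by positivity), rpow_five_halves (by positivity)]
  calc _ ≤ 4 * ((v ^ 2 + 1) * √(v ^ 2 + 1)) / (π * ((v ^ 2 + 1) ^ 2 * √(v ^ 2 + 1))) := by
        gcongr
    _ = 4 / π * (1 + v ^ 2)⁻¹ := by field_simp; ring

lemma abs_Finv_le {v : ℝ} (hv : 0 < v) : |Finv v| ≤ 2 * (1 + v ^ 2)⁻¹ := by
  have hπ : 6 / π ≤ 2 := by rw [div_le_iff₀ pi_pos]; linarith [pi_gt_three]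
  rw [Finv_eq hv]
  calc _ ≤ _ := abs_add_le _ _
    _ ≤ 2 / π * (1 + v ^ 2)⁻¹ + 4 / π * (1 + v ^ 2)⁻¹ :=
        add_le_add (abs_two_sub_sq_div_le v) (abs_sq_mul_arsinh_inv_div_le hv)
    _ = 6 / π * (1 + v ^ 2)⁻¹ := by ring
    _ ≤ 2 * (1 + v ^ 2)⁻¹ := by gcongr

lemma measurable_Finv : Measurable Finv := by
  unfold Finv; fun_prop

/-- `F` is Lebesgue integrable on `(0, ∞)`. -/
theorem stmt3 : IntegrableOn Finv (Set.Ioi 0) := by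
  refine (integrable_inv_one_add_sq.const_mul 2).integrableOn.mono'
    measurable_Finv.aestronglyMeasurable ?_
  filter_upwards [self_mem_ae_restrict measurableSet_Ioi] with v hv
  exact abs_Finv_le hv
end
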